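/- arXiv:2310.10146 — 6 statements merged into one kernel-verified Lean document; each statement's English description precedes it below -/
import Mathlib

section
/- Let A be a real m₁×n matrix, B a real m₂×n matrix, U an m₁×m₁ orthogonal matrix, V an m₂×m₂ orthogonal matrix, X an n×n invertible real matrix, and Σ_A (m₁×n), Σ_B (m₂×n) real matrices such that Uᵀ A X = Σ_A, Vᵀ B X = Σ_B, and Xᵀ (AᵀA + BᵀB) X = Iₙ. Then H := AᵀA + BᵀB is invertible, X⁻¹ = Xᵀ H, and H⁻¹ (AᵀA − BᵀB) = X (Σ_AᵀΣ_A − Σ_BᵀΣ_B) Xᵀ H. -/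
open Matrix

/-! `Xᵀ H X = 1` says that `X` is `H`-orthogonal, so `X⁻¹ = Xᵀ H` and `H⁻¹ = X Xᵀ`; hence
`H⁻¹ D = X (Xᵀ D X) X⁻¹` for every `D`. With `D = AᵀA − BᵀB`, orthogonality of `U` and `V`
identifies `Xᵀ D X` with `Σ_AᵀΣ_A − Σ_BᵀΣ_B`. -/

namespace Matrix

section Congruence

variable {n R : Type*} [Fintype n] [DecidableEq n] [CommRing R] {H X : Matrix n n R}

theorem mul_mul_transpose_eq_one_of_transpose_mul_mul_eq_one (h : Xᵀ * H * X = 1) :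
    H * (X * Xᵀ) = 1 := by
  rw [← mul_assoc]
  exact mul_eq_one_comm.mp (by rwa [← mul_assoc])

theorem isUnit_of_transpose_mul_mul_eq_one (h : Xᵀ * H * X = 1) : IsUnit H :=
  IsUnit.of_mul_eq_one _ (mul_mul_transpose_eq_one_of_transpose_mul_mul_eq_one h)

theorem inv_eq_transpose_mul_of_transpose_mul_mul_eq_one (h : Xᵀ * H * X = 1) :
    X⁻¹ = Xᵀ * H :=
  inv_eq_left_inv h

theorem inv_eq_mul_transpose_of_transpose_mul_mul_eq_one (h : Xᵀ * H * X = 1) :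
    H⁻¹ = X * Xᵀ :=
  inv_eq_right_inv (mul_mul_transpose_eq_one_of_transpose_mul_mul_eq_one h)

theorem inv_mul_eq_mul_transpose_mul_mul_mul_inv (h : Xᵀ * H * X = 1) (D : Matrix n n R) :
    H⁻¹ * D = X * (Xᵀ * D * X) * X⁻¹ := by
  have hX : X * X⁻¹ = 1 :=
    mul_eq_one_comm.mp (by rwa [inv_eq_transpose_mul_of_transpose_mul_mul_eq_one h])
  calc H⁻¹ * D = X * Xᵀ * D * (X * X⁻¹) := by
        rw [hX, mul_one, inv_eq_mul_transpose_of_transpose_mul_mul_eq_one h]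
    _ = X * (Xᵀ * D * X) * X⁻¹ := by simp only [mul_assoc]

end Congruence

theorem transpose_mul_self_transpose_mul_mul {m k l R : Type*} [Fintype m] [DecidableEq m]
    [Fintype k] [CommRing R] {U : Matrix m m R} (hU : Uᵀ * U = 1) (A : Matrix m k R)
    (X : Matrix k l R) :
    (Uᵀ * A * X)ᵀ * (Uᵀ * A * X) = Xᵀ * (Aᵀ * A) * X := by
  have hU' : U * Uᵀ = 1 := mul_eq_one_comm.mp hU
  calc (Uᵀ * A * X)ᵀ * (Uᵀ * A * X) = Xᵀ * Aᵀ * (U * Uᵀ) * A * X := by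
        simp only [transpose_mul, transpose_transpose, Matrix.mul_assoc]
    _ = Xᵀ * (Aᵀ * A) * X := by rw [hU', Matrix.mul_one, Matrix.mul_assoc Xᵀ]

end Matrix

theorem gsvd_eigendecomposition_general {m₁ m₂ n : ℕ}
    (A : Matrix (Fin m₁) (Fin n) ℝ) (B : Matrix (Fin m₂) (Fin n) ℝ)
    (U : Matrix (Fin m₁) (Fin m₁) ℝ) (V : Matrix (Fin m₂) (Fin m₂) ℝ)
    (X : Matrix (Fin n) (Fin n) ℝ)
    (SA : Matrix (Fin m₁) (Fin n) ℝ) (SB : Matrix (Fin m₂) (Fin n) ℝ)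
    (hU : Uᵀ * U = 1) (hV : Vᵀ * V = 1)
    (hA : Uᵀ * A * X = SA) (hB : Vᵀ * B * X = SB)
    (hXHX : Xᵀ * (Aᵀ * A + Bᵀ * B) * X = 1) :
    IsUnit (Aᵀ * A + Bᵀ * B) ∧
    X⁻¹ = Xᵀ * (Aᵀ * A + Bᵀ * B) ∧
    (Aᵀ * A + Bᵀ * B)⁻¹ * (Aᵀ * A - Bᵀ * B) =
      X * (SAᵀ * SA - SBᵀ * SB) * Xᵀ * (Aᵀ * A + Bᵀ * B) := by
  have hXinv := inv_eq_transpose_mul_of_transpose_mul_mul_eq_one hXHX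
  have hS : SAᵀ * SA - SBᵀ * SB = Xᵀ * (Aᵀ * A - Bᵀ * B) * X := by
    rw [← hA, ← hB, transpose_mul_self_transpose_mul_mul hU,
      transpose_mul_self_transpose_mul_mul hV, mul_sub, sub_mul]
  refine ⟨isUnit_of_transpose_mul_mul_eq_one hXHX, hXinv, ?_⟩
  rw [hS, mul_assoc _ Xᵀ, ← hXinv]
  exact inv_mul_eq_mul_transpose_mul_mul_mul_inv hXHX _

/-- The eigendecomposition `S = X (Σ_Aᵀ Σ_A − Σ_Bᵀ Σ_B) Xᵀ H` of
`S = H⁻¹(AᵀA − BᵀB)`, `H = AᵀA + BᵀB`, induced by a GSVD of `(A, B)`. -/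
theorem gsvd_eigendecomposition {m₁ m₂ n : ℕ}
    (A : Matrix (Fin m₁) (Fin n) ℝ) (B : Matrix (Fin m₂) (Fin n) ℝ)
    (U : Matrix (Fin m₁) (Fin m₁) ℝ) (V : Matrix (Fin m₂) (Fin m₂) ℝ)
    (X : Matrix (Fin n) (Fin n) ℝ)
    (SA : Matrix (Fin m₁) (Fin n) ℝ) (SB : Matrix (Fin m₂) (Fin n) ℝ)
    (hU : Uᵀ * U = 1) (hV : Vᵀ * V = 1) (hX : IsUnit X)
    (hA : Uᵀ * A * X = SA) (hB : Vᵀ * B * X = SB)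
    (hXHX : Xᵀ * (Aᵀ * A + Bᵀ * B) * X = 1) :
    IsUnit (Aᵀ * A + Bᵀ * B) ∧
    X⁻¹ = Xᵀ * (Aᵀ * A + Bᵀ * B) ∧
    (Aᵀ * A + Bᵀ * B)⁻¹ * (Aᵀ * A - Bᵀ * B) =
      X * (SAᵀ * SA - SBᵀ * SB) * Xᵀ * (Aᵀ * A + Bᵀ * B) :=
  gsvd_eigendecomposition_general A B U V X SA SB hU hV hA hB hXHX
end

section
/- Let A be a real m₁×n matrix and B a real m₂×n matrix, let x ∈ ℝⁿ, u ∈ ℝ^{m₁}, v ∈ ℝ^{m₂}, and let c, s be real numbers with c² + s² = 1. If A x = c·u, B x = s·v, and s·Aᵀu = c·Bᵀv, then AᵀA x = c²·(AᵀA + BᵀB) x and BᵀB x = s²·(AᵀA + BᵀB) x; consequently, if H := AᵀA + BᵀB is invertible, then H⁻¹(AᵀA − BᵀB) x = (c² − s²)·x, i.e., (c² − s², x) is an eigenpair of S = H⁻¹(AᵀA − BᵀB). -/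
open Matrix

/-- A generalized singular quintuple `(c, s, u, v, x)` with
`c² + s² = 1` gives `AᵀA x = c² (AᵀA + BᵀB) x`, `BᵀB x = s² (AᵀA + BᵀB) x`,
and hence `(c² − s², x)` is an eigenpair of `S = H⁻¹(AᵀA − BᵀB)` when
`H = AᵀA + BᵀB` is invertible. -/
theorem gsvd_quintuple_eigenpair {m₁ m₂ n : ℕ}
    (A : Matrix (Fin m₁) (Fin n) ℝ) (B : Matrix (Fin m₂) (Fin n) ℝ)
    (x : Fin n → ℝ) (u : Fin m₁ → ℝ) (v : Fin m₂ → ℝ) (c s : ℝ)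
    (hcs : c ^ 2 + s ^ 2 = 1)
    (h1 : A *ᵥ x = c • u) (h2 : B *ᵥ x = s • v)
    (h3 : s • (Aᵀ *ᵥ u) = c • (Bᵀ *ᵥ v)) :
    (Aᵀ * A) *ᵥ x = c ^ 2 • ((Aᵀ * A + Bᵀ * B) *ᵥ x) ∧
    (Bᵀ * B) *ᵥ x = s ^ 2 • ((Aᵀ * A + Bᵀ * B) *ᵥ x) ∧
    (IsUnit (Aᵀ * A + Bᵀ * B) →
      ((Aᵀ * A + Bᵀ * B)⁻¹ * (Aᵀ * A - Bᵀ * B)) *ᵥ x = (c ^ 2 - s ^ 2) • x) := by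
  have hA : (Aᵀ * A) *ᵥ x = c • (Aᵀ *ᵥ u) := by
    rw [← mulVec_mulVec, h1, mulVec_smul]
  have hB : (Bᵀ * B) *ᵥ x = s • (Bᵀ *ᵥ v) := by
    rw [← mulVec_mulVec, h2, mulVec_smul]
  have hsum : (Aᵀ * A + Bᵀ * B) *ᵥ x = c • (Aᵀ *ᵥ u) + s • (Bᵀ *ᵥ v) := by
    rw [add_mulVec, hA, hB]
  have g1 : (Aᵀ * A) *ᵥ x = c ^ 2 • ((Aᵀ * A + Bᵀ * B) *ᵥ x) := by
    rw [hA, hsum]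
    funext i
    have hi := congrFun h3 i
    simp only [Pi.smul_apply, Pi.add_apply, smul_eq_mul] at hi ⊢
    linear_combination (-(c * (Aᵀ *ᵥ u) i)) * hcs + c * s * hi
  have g2 : (Bᵀ * B) *ᵥ x = s ^ 2 • ((Aᵀ * A + Bᵀ * B) *ᵥ x) := by
    rw [hB, hsum]
    funext i
    have hi := congrFun h3 i
    simp only [Pi.smul_apply, Pi.add_apply, smul_eq_mul] at hi ⊢
    linear_combination (-(s * (Bᵀ *ᵥ v) i)) * hcs - c * s * hi
  refine ⟨g1, g2, fun hH => ?_⟩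
  have hdiff : (Aᵀ * A - Bᵀ * B) *ᵥ x = (c ^ 2 - s ^ 2) • ((Aᵀ * A + Bᵀ * B) *ᵥ x) := by
    rw [sub_mulVec, g1, g2, sub_smul]
  rw [← mulVec_mulVec, hdiff, mulVec_smul, mulVec_mulVec,
    Matrix.nonsing_inv_mul _ ((Matrix.isUnit_iff_isUnit_det _).mp hH), one_mulVec]
end

section
/- Let A be a real m₁×n matrix and B a real m₂×n matrix, let x̂ ∈ ℝⁿ, û ∈ ℝ^{m₁}, v̂ ∈ ℝ^{m₂}, and let ĉ, ŝ be real numbers such that A x̂ = ĉ·û and B x̂ = ŝ·v̂. Then ĉ·ŝ·(ŝ·Aᵀû − ĉ·Bᵀv̂) = ŝ²·AᵀA x̂ − ĉ²·BᵀB x̂. If in addition ĉ² + ŝ² = 1, this quantity equals AᵀA x̂ − ĉ²·(AᵀA + BᵀB) x̂; consequently, if moreover ĉ·ŝ ≠ 0 and yᵀ(ŝ·Aᵀû − ĉ·Bᵀv̂) = 0 for every y in a subspace 𝒳 of ℝⁿ, then yᵀ(AᵀA x̂ − ĉ²·(AᵀA + BᵀB) x̂) = 0 for every y ∈ 𝒳.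 -/
open Matrix

/-- For Ritz approximations with `A x̂ = ĉ û`, `B x̂ = ŝ v̂`:
`ĉ ŝ (ŝ Aᵀ û − ĉ Bᵀ v̂) = ŝ² AᵀA x̂ − ĉ² BᵀB x̂`; if `ĉ² + ŝ² = 1` this equals
`AᵀA x̂ − ĉ² (AᵀA + BᵀB) x̂`; and if moreover `ĉ ŝ ≠ 0` and
`ŝ Aᵀ û − ĉ Bᵀ v̂ ⊥ 𝒳`, then `AᵀA x̂ − ĉ² (AᵀA + BᵀB) x̂ ⊥ 𝒳`.
Here `xh, uh, vh, ch, sh` stand for `x̂, û, v̂, ĉ, ŝ`. -/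
theorem ritz_pair_projection {m₁ m₂ n : ℕ}
    (A : Matrix (Fin m₁) (Fin n) ℝ) (B : Matrix (Fin m₂) (Fin n) ℝ)
    (xh : Fin n → ℝ) (uh : Fin m₁ → ℝ) (vh : Fin m₂ → ℝ) (ch sh : ℝ)
    (h1 : A *ᵥ xh = ch • uh) (h2 : B *ᵥ xh = sh • vh) :
    (ch * sh) • (sh • (Aᵀ *ᵥ uh) - ch • (Bᵀ *ᵥ vh)) =
      sh ^ 2 • ((Aᵀ * A) *ᵥ xh) - ch ^ 2 • ((Bᵀ * B) *ᵥ xh) ∧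
    (ch ^ 2 + sh ^ 2 = 1 →
      sh ^ 2 • ((Aᵀ * A) *ᵥ xh) - ch ^ 2 • ((Bᵀ * B) *ᵥ xh) =
        (Aᵀ * A) *ᵥ xh - ch ^ 2 • ((Aᵀ * A + Bᵀ * B) *ᵥ xh)) ∧
    (ch ^ 2 + sh ^ 2 = 1 → ch * sh ≠ 0 →
      ∀ 𝒳 : Submodule ℝ (Fin n → ℝ),
        (∀ y ∈ 𝒳, y ⬝ᵥ (sh • (Aᵀ *ᵥ uh) - ch • (Bᵀ *ᵥ vh)) = 0) →
        ∀ y ∈ 𝒳, y ⬝ᵥ ((Aᵀ * A) *ᵥ xh - ch ^ 2 • ((Aᵀ * A + Bᵀ * B) *ᵥ xh)) = 0) := by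
  have hA : (Aᵀ * A) *ᵥ xh = ch • (Aᵀ *ᵥ uh) := by
    rw [← mulVec_mulVec, h1, mulVec_smul]
  have hB : (Bᵀ * B) *ᵥ xh = sh • (Bᵀ *ᵥ vh) := by
    rw [← mulVec_mulVec, h2, mulVec_smul]
  have key : (ch * sh) • (sh • (Aᵀ *ᵥ uh) - ch • (Bᵀ *ᵥ vh)) =
      sh ^ 2 • ((Aᵀ * A) *ᵥ xh) - ch ^ 2 • ((Bᵀ * B) *ᵥ xh) := by
    rw [hA, hB, smul_sub, smul_smul, smul_smul, smul_smul, smul_smul]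
    ring_nf
  have key2 : ∀ h : ch ^ 2 + sh ^ 2 = 1,
      sh ^ 2 • ((Aᵀ * A) *ᵥ xh) - ch ^ 2 • ((Bᵀ * B) *ᵥ xh) =
        (Aᵀ * A) *ᵥ xh - ch ^ 2 • ((Aᵀ * A + Bᵀ * B) *ᵥ xh) := by
    intro h
    rw [add_mulVec, smul_add]
    have hs : sh ^ 2 = 1 - ch ^ 2 := by linarith
    rw [hs, sub_smul, one_smul]
    abel
  refine ⟨key, key2, fun h hcs 𝒳 horth y hy => ?_⟩
  have := horth y hy
  have hq : y ⬝ᵥ ((ch * sh) • (sh • (Aᵀ *ᵥ uh) - ch • (Bᵀ *ᵥ vh))) = 0 := by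
    rw [dotProduct_smul, this, smul_zero]
  rw [key, key2 h] at hq
  exact hq
end

section
/- Let H be a symmetric n×n real matrix and X an invertible n×n real matrix with Xᵀ H X = Iₙ. Partition X = [X_p, X_⊥], where X_p consists of the first p columns and X_⊥ of the remaining n−p columns. Let Γ = diag(γ₁,…,γₙ) be a real diagonal matrix, Γ_p = diag(γ₁,…,γ_p), Γ'_p = diag(γ_{p+1},…,γₙ), and assume γ₁,…,γ_p are all nonzero. Set P = X Γ X⁻¹. Let X⁰ be an n×p real matrix such that X_pᵀ H X⁰ is invertible, and put E⁰ = X_⊥ᵀ H X⁰ (X_pᵀ H X⁰)⁻¹. Then for every integer k ≥ 0: P^k X⁰ (X_pᵀ H X⁰)⁻¹ Γ_p^{−k} = X_p + X_⊥ · (Γ'_p)^k E⁰ Γ_p^{−k}. -/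
open Matrix

/-- The basic identity of subspace iteration applied to
`P = X Γ X⁻¹`, where `Xᵀ H X = I` and `X = [X_p, X_⊥]` (columns indexed by
`Fin p ⊕ Fin m`): for all `k ≥ 0`,
`P^k X⁰ (X_pᵀ H X⁰)⁻¹ Γ_p^{−k} = X_p + X_⊥ (Γ'_p)^k E⁰ Γ_p^{−k}`. -/
theorem subspace_iteration_identity {p m : ℕ}
    (H X : Matrix (Fin p ⊕ Fin m) (Fin p ⊕ Fin m) ℝ)
    (hH : Hᵀ = H) (hX : IsUnit X) (hXHX : Xᵀ * H * X = 1)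
    (γ : Fin p ⊕ Fin m → ℝ) (hγ : ∀ i : Fin p, γ (Sum.inl i) ≠ 0)
    (Xp : Matrix (Fin p ⊕ Fin m) (Fin p) ℝ) (hXp : Xp = X.submatrix id Sum.inl)
    (Xperp : Matrix (Fin p ⊕ Fin m) (Fin m) ℝ) (hXperp : Xperp = X.submatrix id Sum.inr)
    (P : Matrix (Fin p ⊕ Fin m) (Fin p ⊕ Fin m) ℝ) (hP : P = X * Matrix.diagonal γ * X⁻¹)
    (X0 : Matrix (Fin p ⊕ Fin m) (Fin p) ℝ) (hinv : IsUnit (Xpᵀ * H * X0))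
    (E0 : Matrix (Fin m) (Fin p) ℝ)
    (hE0 : E0 = Xperpᵀ * H * X0 * (Xpᵀ * H * X0)⁻¹) :
    ∀ k : ℕ,
      P ^ k * X0 * (Xpᵀ * H * X0)⁻¹ * ((Matrix.diagonal (γ ∘ Sum.inl))⁻¹) ^ k =
        Xp + Xperp *
          ((Matrix.diagonal (γ ∘ Sum.inr)) ^ k * E0 * ((Matrix.diagonal (γ ∘ Sum.inl))⁻¹) ^ k) := by
  intro k
  set A := Xpᵀ * H * X0 with hA
  set B := Xperpᵀ * H * X0 with hB
  set D1 := Matrix.diagonal (γ ∘ Sum.inl) with hD1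
  set D2 := Matrix.diagonal (γ ∘ Sum.inr) with hD2
  have hXcols : X = fromCols Xp Xperp := by
    subst hXp hXperp
    ext i j
    cases j <;> simp [fromCols]
  have hXinv : X⁻¹ = Xᵀ * H := Matrix.inv_eq_left_inv hXHX
  have hright : X * (Xᵀ * H) = 1 := by
    rw [mul_eq_one_comm]; exact hXHX
  have hPk : ∀ k : ℕ, P ^ k = X * (Matrix.diagonal γ) ^ k * (Xᵀ * H) := by
    intro k
    induction k with
    | zero => simp [hright]
    | succ n ih =>
        rw [pow_succ, ih, hP, hXinv, pow_succ]
        rw [show X * Matrix.diagonal γ ^ n * (Xᵀ * H) * (X * Matrix.diagonal γ * (Xᵀ * H))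
            = X * Matrix.diagonal γ ^ n * (Xᵀ * H * X) * Matrix.diagonal γ * (Xᵀ * H) by
          simp only [mul_assoc]]
        rw [hXHX, mul_one, mul_assoc X _ _]
  -- diagonal γ as a block matrix
  have hγelim : Sum.elim (γ ∘ Sum.inl) (γ ∘ Sum.inr) = γ := by
    funext i; cases i <;> rfl
  have hΓk : (Matrix.diagonal γ) ^ k = fromBlocks (D1 ^ k) 0 0 (D2 ^ k) := by
    have hfun : (γ ^ k) = Sum.elim ((γ ∘ Sum.inl) ^ k) ((γ ∘ Sum.inr) ^ k) := by
      funext i; cases i <;> simp [Pi.pow_apply]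
    rw [hD1, hD2, Matrix.diagonal_pow, Matrix.diagonal_pow, Matrix.diagonal_pow,
      Matrix.fromBlocks_diagonal, hfun]
  have hXtH : Xᵀ * H * X0 = fromRows A B := by
    rw [hXcols, transpose_fromCols, fromRows_mul, fromRows_mul]
  -- invertibility facts
  have hAinv : A * A⁻¹ = 1 :=
    Matrix.mul_nonsing_inv A ((Matrix.isUnit_iff_isUnit_det A).mp hinv)
  have hD1unit : IsUnit D1.det := by
    rw [hD1, Matrix.det_diagonal]
    exact (Finset.prod_ne_zero_iff.mpr fun i _ => hγ i).isUnit
  have hD1k : D1 ^ k * (D1⁻¹) ^ k = 1 := by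
    rw [Matrix.inv_pow']
    exact Matrix.mul_nonsing_inv _ (by simpa using hD1unit.pow k)
  calc P ^ k * X0 * A⁻¹ * (D1⁻¹) ^ k
      = X * ((Matrix.diagonal γ) ^ k * (Xᵀ * H * X0) * A⁻¹ * (D1⁻¹) ^ k) := by
        rw [hPk k]; simp only [Matrix.mul_assoc]
    _ = X * fromRows (D1 ^ k * A * A⁻¹ * (D1⁻¹) ^ k) (D2 ^ k * B * A⁻¹ * (D1⁻¹) ^ k) := by
        rw [hXtH, hΓk, fromBlocks_mul_fromRows, fromRows_mul, fromRows_mul]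
        simp
    _ = Xp + Xperp * (D2 ^ k * E0 * (D1⁻¹) ^ k) := by
        rw [show D1 ^ k * A * A⁻¹ * (D1⁻¹) ^ k = 1 by
              rw [mul_assoc (D1 ^ k), hAinv, mul_one, hD1k],
            hXcols, fromCols_mul_fromRows, hE0]
        simp only [Matrix.mul_one, Matrix.mul_assoc]
end

section
/- Let E be a q×p real matrix. Then I_p + EᵀE is symmetric positive definite and ‖E · (I_p + EᵀE)^{−1/2}‖ = ‖E‖ / √(1 + ‖E‖²), where (I_p + EᵀE)^{−1/2} denotes the inverse of the (unique) symmetric positive definite square root of I_p + EᵀE. -/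
open Matrix

/-- The spectral norm (operator 2-norm) of a real matrix. -/
noncomputable def specNorm {m n : ℕ} (A : Matrix (Fin m) (Fin n) ℝ) : ℝ :=
  ‖LinearMap.toContinuousLinearMap (Matrix.toEuclideanLin A)‖

open scoped ComplexOrder in
/-- The positive semidefinite square root of a positive semidefinite matrix
(restored verbatim from the older Mathlib, where it has since been removed). -/
noncomputable def Matrix.PosSemidef.sqrt {n : Type*} [Fintype n] [DecidableEq n]
    {𝕜 : Type*} [RCLike 𝕜] {A : Matrix n n 𝕜} (hA : A.PosSemidef) : Matrix n n 𝕜 :=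
  hA.1.eigenvectorUnitary.1 * diagonal ((↑) ∘ (√·) ∘ hA.1.eigenvalues) *
  (star hA.1.eigenvectorUnitary : Matrix n n 𝕜)

open RealInnerProductSpace

noncomputable def clmOf {m n : ℕ} (A : Matrix (Fin m) (Fin n) ℝ) :
    EuclideanSpace ℝ (Fin n) →L[ℝ] EuclideanSpace ℝ (Fin m) :=
  LinearMap.toContinuousLinearMap (Matrix.toEuclideanLin A)

lemma clmOf_apply {m n : ℕ} (A : Matrix (Fin m) (Fin n) ℝ) (v) :
    clmOf A v = Matrix.toEuclideanLin A v := rfl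

lemma clmOf_mul {m n k : ℕ} (A : Matrix (Fin m) (Fin n) ℝ)
    (B : Matrix (Fin n) (Fin k) ℝ) (v : EuclideanSpace ℝ (Fin k)) :
    clmOf (A * B) v = clmOf A (clmOf B v) := by
  simp [clmOf_apply, Matrix.toEuclideanLin_apply, Matrix.mulVec_mulVec]

lemma clmOf_one {n : ℕ} (v : EuclideanSpace ℝ (Fin n)) :
    clmOf (1 : Matrix (Fin n) (Fin n) ℝ) v = v := by
  simp [clmOf_apply, Matrix.toEuclideanLin_apply]

lemma clmOf_add {m n : ℕ} (A B : Matrix (Fin m) (Fin n) ℝ) (v) :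
    clmOf (A + B) v = clmOf A v + clmOf B v := by
  simp [clmOf_apply, map_add]

lemma conjT_eq_transpose {m n : ℕ} (A : Matrix (Fin m) (Fin n) ℝ) : Aᴴ = Aᵀ := by
  ext i j; simp [Matrix.conjTranspose_apply]

lemma inner_clmOf_transpose {m n : ℕ} (A : Matrix (Fin m) (Fin n) ℝ)
    (x : EuclideanSpace ℝ (Fin m)) (y : EuclideanSpace ℝ (Fin n)) :
    ⟪clmOf Aᵀ x, y⟫ = ⟪x, clmOf A y⟫ := by
  rw [clmOf_apply, clmOf_apply, ← conjT_eq_transpose,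
    Matrix.toEuclideanLin_conjTranspose_eq_adjoint]
  exact LinearMap.adjoint_inner_left _ _ _

lemma inner_clmOf_transpose' {m n : ℕ} (A : Matrix (Fin m) (Fin n) ℝ)
    (x : EuclideanSpace ℝ (Fin n)) (y : EuclideanSpace ℝ (Fin m)) :
    ⟪x, clmOf Aᵀ y⟫ = ⟪clmOf A x, y⟫ := by
  rw [real_inner_comm, inner_clmOf_transpose, real_inner_comm]

lemma le_of_sq_le_sq' {x y : ℝ} (hx : 0 ≤ x) (hy : 0 ≤ y) (h : x ^ 2 ≤ y ^ 2) :
    x ≤ y := by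
  have := Real.sqrt_le_sqrt h
  rwa [Real.sqrt_sq hx, Real.sqrt_sq hy] at this

lemma psd_sqrt_mul_self' {n : Type*} [Fintype n] [DecidableEq n]
    {A : Matrix n n ℝ} (hA : A.PosSemidef) : hA.sqrt * hA.sqrt = A := by
  have hU : (star hA.1.eigenvectorUnitary : Matrix n n ℝ) * hA.1.eigenvectorUnitary.1 = 1 :=
    Unitary.star_mul_self_of_mem hA.1.eigenvectorUnitary.2
  have hD : diagonal (RCLike.ofReal ∘ (√·) ∘ hA.1.eigenvalues : n → ℝ) * diagonal (RCLike.ofReal ∘ (√·) ∘ hA.1.eigenvalues : n → ℝ)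
      = diagonal (RCLike.ofReal ∘ hA.1.eigenvalues : n → ℝ) := by
    rw [diagonal_mul_diagonal]; congr 1; funext i
    simp [Real.mul_self_sqrt (hA.eigenvalues_nonneg i)]
  conv_rhs => rw [hA.1.spectral_theorem]
  rw [Matrix.PosSemidef.sqrt, Unitary.conjStarAlgAut_apply]
  simp only [Matrix.mul_assoc]
  rw [← Matrix.mul_assoc (star _ : Matrix n n ℝ), hU, Matrix.one_mul, ← Matrix.mul_assoc _ _ (star _ : Matrix n n ℝ), hD]

lemma psd_sqrt_isHermitian' {n : Type*} [Fintype n] [DecidableEq n]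
    {A : Matrix n n ℝ} (hA : A.PosSemidef) : hA.sqrt.IsHermitian := by
  unfold Matrix.PosSemidef.sqrt Matrix.IsHermitian
  rw [conjTranspose_mul, conjTranspose_mul, diagonal_conjTranspose, Matrix.mul_assoc]
  simp [Matrix.star_eq_conjTranspose]

lemma specNorm_eq {m n : ℕ} (A : Matrix (Fin m) (Fin n) ℝ) :
    specNorm A = ‖clmOf A‖ := rfl

set_option maxHeartbeats 1000000

/-- `I + EᵀE` is symmetric positive definite and
`‖E (I + EᵀE)^{−1/2}‖ = ‖E‖ / √(1 + ‖E‖²)`, where `(I + EᵀE)^{−1/2}` is the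
inverse of the unique positive semidefinite (hence symmetric positive definite)
square root `h.sqrt` of `I + EᵀE`. -/
theorem norm_E_mul_inv_sqrt {q p : ℕ} (E : Matrix (Fin q) (Fin p) ℝ) :
    (1 + Eᵀ * E).PosDef ∧
    ∀ h : (1 + Eᵀ * E).PosSemidef,
      specNorm (E * (h.sqrt)⁻¹) = specNorm E / Real.sqrt (1 + specNorm E ^ 2) := by
  have hpsd : (Eᵀ * E).PosSemidef := by
    have := Matrix.posSemidef_conjTranspose_mul_self E
    rwa [conjT_eq_transpose] at this
  have hApd : (1 + Eᵀ * E).PosDef := Matrix.PosDef.add_posSemidef Matrix.PosDef.one hpsd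
  refine ⟨hApd, fun h => ?_⟩
  set S := h.sqrt with hSdef
  have hSS : S * S = 1 + Eᵀ * E := psd_sqrt_mul_self' h
  have hST : Sᵀ = S := by rw [← conjT_eq_transpose]; exact psd_sqrt_isHermitian' h
  have hdet : IsUnit S.det := by
    rw [isUnit_iff_ne_zero]
    intro h0
    have h1 : S.det * S.det = (1 + Eᵀ * E).det := by rw [← Matrix.det_mul, hSS]
    rw [h0, mul_zero] at h1
    exact absurd h1.symm (ne_of_gt hApd.det_pos)
  set M := E * S⁻¹ with hM
  have hMS : M * S = E := by
    rw [hM, Matrix.mul_assoc, Matrix.nonsing_inv_mul S hdet, Matrix.mul_one]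
  have hSSi : S * S⁻¹ = 1 := Matrix.mul_nonsing_inv S hdet
  -- the key norm identity
  have key : ∀ u : EuclideanSpace ℝ (Fin p),
      ‖clmOf S u‖ ^ 2 = ‖u‖ ^ 2 + ‖clmOf E u‖ ^ 2 := by
    intro u
    have h1 : ⟪clmOf S u, clmOf S u⟫ = ⟪u, clmOf (S * S) u⟫ := by
      rw [clmOf_mul, ← inner_clmOf_transpose S u (clmOf S u), hST]
    have h2 : ⟪u, clmOf (Eᵀ * E) u⟫ = ‖clmOf E u‖ ^ 2 := by
      rw [clmOf_mul, inner_clmOf_transpose', real_inner_self_eq_norm_sq]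
    calc ‖clmOf S u‖ ^ 2 = ⟪clmOf S u, clmOf S u⟫ := (real_inner_self_eq_norm_sq _).symm
      _ = ⟪u, clmOf (S * S) u⟫ := h1
      _ = ⟪u, u + clmOf (Eᵀ * E) u⟫ := by rw [hSS, clmOf_add, clmOf_one]
      _ = ⟪u, u⟫ + ⟪u, clmOf (Eᵀ * E) u⟫ := inner_add_right _ _ _
      _ = ‖u‖ ^ 2 + ‖clmOf E u‖ ^ 2 := by rw [real_inner_self_eq_norm_sq, h2]
  set N := specNorm E with hNdef
  have hN0 : 0 ≤ N := norm_nonneg _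
  set s := Real.sqrt (1 + N ^ 2) with hsdef
  have hs2 : s ^ 2 = 1 + N ^ 2 := Real.sq_sqrt (by positivity)
  have hs0 : 0 < s := Real.sqrt_pos.mpr (by positivity)
  -- step A : ‖M‖ ≤ N / s
  have stepA : ‖clmOf M‖ ≤ N / s := by
    apply ContinuousLinearMap.opNorm_le_bound _ (by positivity)
    intro v
    set u := clmOf S⁻¹ v with hu
    have hv : clmOf S u = v := by rw [hu, ← clmOf_mul, hSSi, clmOf_one]
    have hMv : clmOf M v = clmOf E u := by rw [← hv, ← clmOf_mul, hMS]
    have ht : ‖v‖ ^ 2 = ‖u‖ ^ 2 + ‖clmOf E u‖ ^ 2 := by rw [← hv]; exact key u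
    rw [hMv]
    have ha : ‖clmOf E u‖ ≤ N * ‖u‖ := by
      rw [hNdef, specNorm_eq]; exact (clmOf E).le_opNorm u
    have ha0 : 0 ≤ ‖clmOf E u‖ := norm_nonneg _
    have hc0 : 0 ≤ ‖u‖ := norm_nonneg _
    have ht0 : 0 ≤ ‖v‖ := norm_nonneg _
    have hsq : (‖clmOf E u‖ * s) ^ 2 ≤ (N * ‖v‖) ^ 2 := by
      nlinarith [mul_self_le_mul_self ha0 ha]
    have := le_of_sq_le_sq' (mul_nonneg ha0 hs0.le) (mul_nonneg hN0 ht0) hsq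
    rw [div_mul_eq_mul_div, le_div_iff₀ hs0]
    linarith
  set K := ‖clmOf M‖ with hKdef
  have hK0 : 0 ≤ K := norm_nonneg _
  have hNs : N < s := (Real.lt_sqrt hN0).mpr (by linarith)
  have hK1 : K < 1 := lt_of_le_of_lt stepA ((div_lt_one hs0).mpr hNs)
  set t := Real.sqrt (1 - K ^ 2) with htdef
  have ht2 : t ^ 2 = 1 - K ^ 2 := Real.sq_sqrt (by nlinarith)
  have ht0 : 0 < t := Real.sqrt_pos.mpr (by nlinarith)
  -- step B : N ≤ K / t
  have stepB : N ≤ K / t := by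
    rw [hNdef, specNorm_eq]
    apply ContinuousLinearMap.opNorm_le_bound _ (by positivity)
    intro u
    have hEu : clmOf E u = clmOf M (clmOf S u) := by rw [← clmOf_mul, hMS]
    have hb : ‖clmOf M (clmOf S u)‖ ≤ K * ‖clmOf S u‖ := (clmOf M).le_opNorm _
    have hkey := key u
    have ha0 : 0 ≤ ‖clmOf E u‖ := norm_nonneg _
    have hc0 : 0 ≤ ‖u‖ := norm_nonneg _
    have hw0 : 0 ≤ ‖clmOf S u‖ := norm_nonneg _
    have hab : ‖clmOf E u‖ ≤ K * ‖clmOf S u‖ := by rw [hEu]; exact hb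
    have hsq : (‖clmOf E u‖ * t) ^ 2 ≤ (K * ‖u‖) ^ 2 := by
      nlinarith [mul_self_le_mul_self ha0 hab]
    have := le_of_sq_le_sq' (mul_nonneg ha0 ht0.le) (mul_nonneg hK0 hc0) hsq
    rw [div_mul_eq_mul_div, le_div_iff₀ ht0]
    linarith
  -- combine
  have hNt : N * t ≤ K := by rwa [← le_div_iff₀ ht0]
  have hsqf : N ^ 2 ≤ (K * s) ^ 2 := by
    nlinarith [mul_self_le_mul_self (mul_nonneg hN0 ht0.le) hNt]
  have hfinal : N ≤ K * s := le_of_sq_le_sq' hN0 (mul_nonneg hK0 hs0.le) hsqf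
  rw [specNorm_eq]
  refine le_antisymm stepA ?_
  rw [div_le_iff₀ hs0]
  linarith
end

section
/- Let E be a q×p real matrix. Then ‖I_p − (I_p + EᵀE)^{−1/2}‖ = 1 − 1/√(1 + ‖E‖²) ≤ ‖E‖²/(1 + ‖E‖²), where (I_p + EᵀE)^{−1/2} denotes the inverse of the (unique) symmetric positive definite square root of I_p + EᵀE. -/
open Matrix
open scoped Matrix.Norms.L2Operator

/-- The positive semidefinite square root of a positive semidefinite matrix, as defined by
`Matrix.PosSemidef.sqrt` in the older Mathlib (removed since). -/
noncomputable def posSemidefSqrt {n : Type*} [Fintype n] [DecidableEq n] 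
    {A : Matrix n n ℝ} (hA : A.PosSemidef) : Matrix n n ℝ :=
  hA.1.eigenvectorUnitary.1 * diagonal ((↑) ∘ (√·) ∘ hA.1.eigenvalues) *
    (star hA.1.eigenvectorUnitary : Matrix n n ℝ)

lemma specNorm_eq_l2 {m n : ℕ} (A : Matrix (Fin m) (Fin n) ℝ) : specNorm A = ‖A‖ := rfl

lemma pi_norm_eq_max {p : ℕ} (d : Fin p → ℝ) (i₀ : Fin p) (h0 : 0 ≤ d i₀)
    (hmax : ∀ i, |d i| ≤ d i₀) : ‖d‖ = d i₀ := by
  refine le_antisymm ((pi_norm_le_iff_of_nonneg h0).2 fun i => by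
      simpa [Real.norm_eq_abs] using hmax i) ?_
  calc d i₀ ≤ |d i₀| := le_abs_self _
    _ ≤ ‖d‖ := by simpa [Real.norm_eq_abs] using norm_le_pi_norm d i₀

lemma l2_opNorm_diag {p : ℕ} (v : Fin p → ℝ) : ‖Matrix.diagonal v‖ = ‖v‖ := by
  refine le_antisymm ?_ ?_
  · rw [Matrix.l2_opNorm_def]
    refine ContinuousLinearMap.opNorm_le_bound _ (norm_nonneg v) fun x => ?_
    have h1 : ∀ y : EuclideanSpace ℝ (Fin p), ‖y‖ = Real.sqrt (∑ i, (y i)^2) := by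
      intro y
      rw [EuclideanSpace.norm_eq]
      congr 1
      exact Finset.sum_congr rfl fun i _ => by rw [Real.norm_eq_abs, sq_abs]
    rw [h1, h1]
    have hz : ∀ i, ((LinearMap.toContinuousLinearMap (toEuclideanLin (diagonal v))) x) i
        = v i * x i := by
      intro i
      show (toEuclideanLin (diagonal v) x) i = _
      rw [toEuclideanLin_apply]
      exact Matrix.mulVec_diagonal v _ i
    have key : ∑ i, (((LinearMap.toContinuousLinearMap (toEuclideanLin (diagonal v))) x) i)^2
        ≤ ‖v‖^2 * ∑ i, (x i)^2 := by
      rw [Finset.mul_sum]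
      refine Finset.sum_le_sum fun i _ => ?_
      rw [hz i, mul_pow]
      have hv : |v i| ≤ ‖v‖ := by simpa [Real.norm_eq_abs] using norm_le_pi_norm v i
      have h2 : (v i)^2 ≤ ‖v‖^2 := by
        rw [← sq_abs]; exact pow_le_pow_left₀ (abs_nonneg _) hv 2
      exact mul_le_mul_of_nonneg_right h2 (sq_nonneg _)
    calc Real.sqrt (∑ i, (((LinearMap.toContinuousLinearMap (toEuclideanLin (diagonal v))) x) i)^2)
        ≤ Real.sqrt (‖v‖^2 * ∑ i, (x i)^2) := Real.sqrt_le_sqrt key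
      _ = ‖v‖ * Real.sqrt (∑ i, (x i)^2) := by
          rw [Real.sqrt_mul (sq_nonneg _), Real.sqrt_sq (norm_nonneg _)]
  · refine (pi_norm_le_iff_of_nonneg (norm_nonneg _)).2 fun i => ?_
    have h := Matrix.l2_opNorm_mulVec (diagonal v) (EuclideanSpace.single i 1)
    rw [EuclideanSpace.norm_single] at h
    have hmv : Matrix.diagonal v *ᵥ (EuclideanSpace.single i (1:ℝ) : EuclideanSpace ℝ (Fin p))
        = Pi.single i (v i) := by
      ext j
      rw [Matrix.mulVec_diagonal]
      rcases eq_or_ne j i with rfl | hj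
      · simp [EuclideanSpace.single_apply]
      · simp [EuclideanSpace.single_apply, hj, Pi.single_eq_of_ne hj]
    rw [hmv] at h
    have h2 : ‖(EuclideanSpace.equiv (Fin p) ℝ).symm (Pi.single i (v i))‖ = ‖v i‖ := by
      rw [show (EuclideanSpace.equiv (Fin p) ℝ).symm (Pi.single i (v i))
          = EuclideanSpace.single i (v i) from rfl, EuclideanSpace.norm_single]
    rw [h2] at h
    simpa using h

lemma l2_opNorm_conj {p : ℕ} [Nonempty (Fin p)] (U : Matrix.unitaryGroup (Fin p) ℝ)
    (A : Matrix (Fin p) (Fin p) ℝ) :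
    ‖(U : Matrix (Fin p) (Fin p) ℝ) * A * star (U : Matrix (Fin p) (Fin p) ℝ)‖ = ‖A‖ := by
  have : Nontrivial (Matrix (Fin p) (Fin p) ℝ) := inferInstance
  rw [mul_assoc, CStarRing.norm_coe_unitary_mul U (A * star (U : Matrix (Fin p) (Fin p) ℝ))]
  exact CStarRing.norm_mul_coe_unitary A (star U)

/-- `‖I − (I + EᵀE)^{−1/2}‖ = 1 − 1/√(1 + ‖E‖²) ≤ ‖E‖²/(1 + ‖E‖²)`,
where `(I + EᵀE)^{−1/2}` is the inverse of the unique positive semidefinite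
square root `h.sqrt` of `I + EᵀE` (which is symmetric positive definite). -/
theorem norm_one_sub_inv_sqrt {q p : ℕ} (E : Matrix (Fin q) (Fin p) ℝ)
    (h : (1 + Eᵀ * E).PosSemidef) :
    specNorm (1 - (posSemidefSqrt h)⁻¹) = 1 - 1 / Real.sqrt (1 + specNorm E ^ 2) ∧
    specNorm (1 - (posSemidefSqrt h)⁻¹) ≤ specNorm E ^ 2 / (1 + specNorm E ^ 2) := by
  rcases Nat.eq_zero_or_pos p with hp | hp
  · subst hp
    have hzero : ∀ {m : ℕ} (A : Matrix (Fin m) (Fin 0) ℝ), specNorm A = 0 := by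
      intro m A
      have h0 : Matrix.toEuclideanLin A = 0 := by
        apply LinearMap.ext
        intro x
        rw [Subsingleton.elim x 0, map_zero]
        rfl
      rw [specNorm, h0]
      simp
    rw [hzero, hzero]
    norm_num
  · haveI : Nonempty (Fin p) := ⟨⟨0, hp⟩⟩
    set μ : Fin p → ℝ := h.1.eigenvalues with hμdef
    set U : Matrix (Fin p) (Fin p) ℝ := ↑(h.1.eigenvectorUnitary) with hUdef
    have hconj : Eᴴ = Eᵀ := Matrix.conjTranspose_eq_transpose_of_trivial E
    have hET : (Eᵀ * E).PosSemidef := by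
      have := Matrix.posSemidef_conjTranspose_mul_self E
      rwa [hconj] at this
    -- all eigenvalues are at least 1
    have hμ1 : ∀ i, 1 ≤ μ i := by
      intro i
      have hb : (1 + Eᵀ * E) *ᵥ ⇑(h.1.eigenvectorBasis i) = μ i • ⇑(h.1.eigenvectorBasis i) :=
        h.1.mulVec_eigenvectorBasis i
      set x : Fin p → ℝ := ⇑(h.1.eigenvectorBasis i) with hxdef
      have hxx : x ⬝ᵥ x = 1 := by
        have hn : ‖(h.1.eigenvectorBasis i : EuclideanSpace ℝ (Fin p))‖ = 1 :=
          h.1.eigenvectorBasis.orthonormal.1 i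
        rw [EuclideanSpace.norm_eq] at hn
        have h2 := Real.sqrt_eq_one.mp hn
        calc x ⬝ᵥ x = ∑ j, x j * x j := rfl
          _ = ∑ j, ‖(h.1.eigenvectorBasis i : EuclideanSpace ℝ (Fin p)) j‖ ^ 2 := by
              refine Finset.sum_congr rfl fun j _ => ?_
              rw [Real.norm_eq_abs, sq_abs, pow_two]
          _ = 1 := h2
      have h2 := hET.dotProduct_mulVec_nonneg x
      have hmv : (Eᵀ * E) *ᵥ x = (μ i - 1) • x := by
        have heq : (Eᵀ * E : Matrix (Fin p) (Fin p) ℝ) = (1 + Eᵀ * E) - 1 :=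
          (add_sub_cancel_left 1 (Eᵀ * E)).symm
        rw [heq, Matrix.sub_mulVec, hb, Matrix.one_mulVec, sub_smul, one_smul]
      rw [hmv, show star x = x from funext fun j => star_trivial _,
          dotProduct_smul, hxx, smul_eq_mul, mul_one] at h2
      linarith
    have hμpos : ∀ i, 0 < μ i := fun i => lt_of_lt_of_le one_pos (hμ1 i)
    obtain ⟨i₀, hi₀⟩ := Finite.exists_max μ
    -- unitary facts
    have hUU : U * star U = 1 := Matrix.mem_unitaryGroup_iff.mp h.1.eigenvectorUnitary.2
    have hUU' : star U * U = 1 := Matrix.mem_unitaryGroup_iff'.mp h.1.eigenvectorUnitary.2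
    have hspec : (1 + Eᵀ * E) = U * diagonal μ * star U := by
      have hs := h.1.spectral_theorem
      rwa [RCLike.ofReal_real_eq_id, Function.id_comp] at hs
    have hsqrt : posSemidefSqrt h = U * diagonal (fun i => Real.sqrt (μ i)) * star U := by
      unfold posSemidefSqrt
      rfl
    have hinv : (posSemidefSqrt h)⁻¹ = U * diagonal (fun i => (Real.sqrt (μ i))⁻¹) * star U := by
      apply Matrix.inv_eq_right_inv
      rw [hsqrt]
      calc (U * diagonal (fun i => Real.sqrt (μ i)) * star U) *
            (U * diagonal (fun i => (Real.sqrt (μ i))⁻¹) * star U)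
          = U * (diagonal (fun i => Real.sqrt (μ i)) * ((star U * U) *
              diagonal (fun i => (Real.sqrt (μ i))⁻¹))) * star U := by
            simp only [Matrix.mul_assoc]
        _ = 1 := by
            rw [hUU', Matrix.one_mul, Matrix.diagonal_mul_diagonal]
            have hone' : (fun i => Real.sqrt (μ i) * (Real.sqrt (μ i))⁻¹) = fun _ => (1:ℝ) := by
              funext i
              exact mul_inv_cancel₀ (ne_of_gt (Real.sqrt_pos.2 (hμpos i)))
            rw [hone', Matrix.diagonal_one, Matrix.mul_one, hUU]
    set d : Fin p → ℝ := fun i => 1 - (Real.sqrt (μ i))⁻¹ with hddef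
    have hone : (1 : Matrix (Fin p) (Fin p) ℝ) = U * 1 * star U := by
      rw [Matrix.mul_one, hUU]
    have hdiag : (1 : Matrix (Fin p) (Fin p) ℝ) - diagonal (fun i => (Real.sqrt (μ i))⁻¹)
        = diagonal d := by
      rw [← Matrix.diagonal_one, ← Matrix.diagonal_sub]
    have hF : (1 : Matrix (Fin p) (Fin p) ℝ) - (posSemidefSqrt h)⁻¹ = U * diagonal d * star U := by
      rw [hinv]
      conv_lhs => rw [hone]
      rw [← Matrix.sub_mul, ← Matrix.mul_sub, hdiag]
    -- bounds on d
    have hd0 : ∀ i, 0 ≤ d i := by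
      intro i
      have h1 : (1:ℝ) ≤ Real.sqrt (μ i) := by
        rw [show (1:ℝ) = Real.sqrt 1 from (Real.sqrt_one).symm]
        exact Real.sqrt_le_sqrt (hμ1 i)
      have : (Real.sqrt (μ i))⁻¹ ≤ 1 := by
        rw [inv_le_one_iff₀]; right; exact h1
      simp only [hddef]
      linarith
    have hdmax : ∀ i, |d i| ≤ d i₀ := by
      intro i
      rw [abs_of_nonneg (hd0 i)]
      have hs : Real.sqrt (μ i) ≤ Real.sqrt (μ i₀) := Real.sqrt_le_sqrt (hi₀ i)
      have h1 : (Real.sqrt (μ i₀))⁻¹ ≤ (Real.sqrt (μ i))⁻¹ :=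
        inv_anti₀ (Real.sqrt_pos.2 (hμpos i)) hs
      simp only [hddef]
      linarith
    -- norm of F
    have hnF : specNorm (1 - (posSemidefSqrt h)⁻¹) = d i₀ := by
      rw [specNorm_eq_l2, hF, hUdef, l2_opNorm_conj, l2_opNorm_diag,
          pi_norm_eq_max d i₀ (hd0 i₀) hdmax]
    -- norm of EᵀE
    have hEE : specNorm E ^ 2 = μ i₀ - 1 := by
      have h1 : specNorm E ^ 2 = ‖Eᵀ * E‖ := by
        rw [← hconj, Matrix.l2_opNorm_conjTranspose_mul_self, specNorm_eq_l2, pow_two]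
      have h2 : (Eᵀ * E : Matrix (Fin p) (Fin p) ℝ)
          = U * diagonal (fun i => μ i - 1) * star U := by
        have heq : (Eᵀ * E : Matrix (Fin p) (Fin p) ℝ) = (1 + Eᵀ * E) - 1 :=
          (add_sub_cancel_left 1 (Eᵀ * E)).symm
        have hdiag2 : diagonal μ - (1 : Matrix (Fin p) (Fin p) ℝ)
            = diagonal (fun i => μ i - 1) := by
          rw [← Matrix.diagonal_one, ← Matrix.diagonal_sub]
        rw [heq, hspec]
        conv_lhs => rw [hone]
        rw [← Matrix.sub_mul, ← Matrix.mul_sub, hdiag2]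
      rw [h1, h2, hUdef, l2_opNorm_conj, l2_opNorm_diag,
          pi_norm_eq_max _ i₀ (by simpa using sub_nonneg.2 (hμ1 i₀))
            (fun i => by
              show |μ i - 1| ≤ μ i₀ - 1
              rw [abs_of_nonneg (by have := hμ1 i; linarith)]
              have := hi₀ i; linarith)]
    have hsum : 1 + specNorm E ^ 2 = μ i₀ := by rw [hEE]; ring
    constructor
    · rw [hnF, hsum, one_div]
    · rw [hnF, hsum, hEE]
      have hl : 1 ≤ μ i₀ := hμ1 i₀
      have hl0 : 0 < μ i₀ := hμpos i₀
      have hsle : Real.sqrt (μ i₀) ≤ μ i₀ := (Real.sqrt_le_left hl0.le).2 (by nlinarith)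
      have hsp : 0 < Real.sqrt (μ i₀) := Real.sqrt_pos.2 hl0
      have hinvle : (μ i₀)⁻¹ ≤ (Real.sqrt (μ i₀))⁻¹ := inv_anti₀ hsp hsle
      have hd : d i₀ = 1 - (Real.sqrt (μ i₀))⁻¹ := rfl
      have hq : (μ i₀ - 1) / μ i₀ = 1 - (μ i₀)⁻¹ := by field_simp
      rw [hd, hq]
      linarith
end
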